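/- Let θ₁, θ₂ ∈ ℝⁿ satisfy 0 < θ_min ≤ ‖θᵢ‖ ≤ θ_max for i = 1, 2, and suppose ∇g(a*(θᵢ)) = ωᵢθᵢ with ωᵢ > 0 for i = 1, 2. Assume λ^Δ_min·I ⪯ ∇²g(y) for all y in the closed ball B(a*(θ₁), m'), and ‖∇g(a*(θ₁))‖ ≤ ∇_max, where λ^Δ_min > 0, ∇_max > 0, m' > 0. If ‖θ₁ − θ₂‖ ≤ m_θ for some m_θ < min{θ_min, (λ^Δ_min θ_min²/(2∇_max θ_max))·m'}, then ‖a*(θ₁) − a*(θ₂)‖ ≤ (2∇_max θ_max/(λ^Δ_min θ_min²))·‖θ₁ − θ₂‖. -/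

import Mathlib

/-!
Write `Δ = a₂ - a₁`. Since `a₂` maximizes `⟪θ₂, ·⟫` over `𝒜 ∋ a₁`, we have `⟪θ₂, Δ⟫ ≥ 0`, so
`⟪∇g(a₁), Δ⟫ = ω₁⟪θ₁, Δ⟫ ≥ -ω₁‖θ₁ - θ₂‖‖Δ‖`. Along the segment from `a₁` to `a₂`, which stays in
the convex set `𝒜`, the Hessian bound gives the Taylor estimate
`0 ≥ g(a₁ + v) ≥ ⟪∇g(a₁), v⟫ + λ/2 ‖v‖²` as long as `v` stays in the ball of radius `m'`.
Together these force `‖v‖ ≤ 2ω₁‖θ₁ - θ₂‖/λ`, and `ω₁ ≤ ∇max/θmin`; the smallness of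
`‖θ₁ - θ₂‖` makes this bound smaller than `m'`, so the segment never leaves the ball and the
estimate applies to `v = Δ` itself.
-/

open RealInnerProductSpace Set Metric

theorem quadratic_lower_bound_of_le_deriv2 {f f' f'' : ℝ → ℝ} {L : ℝ}
    (hf : ∀ s, HasDerivAt f (f' s) s) (hf' : ∀ s, HasDerivAt f' (f'' s) s)
    (hL : ∀ s ∈ Ico (0 : ℝ) 1, L ≤ f'' s) :
    f 0 + f' 0 + L / 2 ≤ f 1 := by
  have hslope : ∀ s ∈ Icc (0 : ℝ) 1, f' 0 + L * s ≤ f' s := by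
    refine image_le_of_deriv_right_le_deriv_boundary (f' := fun _ => L)
      (by fun_prop) (fun s _ => ?_) (by simp) (fun s _ => (hf' s).continuousAt.continuousWithinAt)
      (fun s _ => (hf' s).hasDerivWithinAt) hL
    simpa using ((hasDerivAt_id s).const_mul L).const_add (f' 0) |>.hasDerivWithinAt
  have := image_le_of_deriv_right_le_deriv_boundary (f := fun s => f 0 + f' 0 * s + L / 2 * s ^ 2)
    (f' := fun s => f' 0 + L * s) (by fun_prop) (fun s _ => ?_) (by simp)
    (fun s _ => (hf s).continuousAt.continuousWithinAt) (fun s _ => (hf s).hasDerivWithinAt)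
    (fun s hs => hslope s (Ico_subset_Icc_self hs)) (right_mem_Icc.2 zero_le_one)
  · simpa using this
  · have h : HasDerivAt (fun s => f 0 + f' 0 * s + L / 2 * s ^ 2) (f' 0 + L * s) s :=
      ((((hasDerivAt_id' s).const_mul (f' 0)).const_add (f 0)).fun_add
        ((hasDerivAt_pow 2 s).const_mul (L / 2))).congr_deriv (by norm_num; ring)
    exact h.hasDerivWithinAt

variable {E : Type*} [NormedAddCommGroup E] [InnerProductSpace ℝ E]

theorem neg_norm_sub_mul_le_inner_of_inner_le {θ₁ θ₂ a₁ a₂ : E} (h : ⟪θ₂, a₁⟫ ≤ ⟪θ₂, a₂⟫) :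
    -(‖θ₁ - θ₂‖ * ‖a₂ - a₁‖) ≤ ⟪θ₁, a₂ - a₁⟫ := by
  have hθ₂ : 0 ≤ ⟪θ₂, a₂ - a₁⟫ := by rw [inner_sub_right]; linarith
  have hCS := neg_le_of_abs_le (abs_real_inner_le_norm (θ₁ - θ₂) (a₂ - a₁))
  rw [← sub_add_cancel θ₁ θ₂, inner_add_left, add_sub_cancel_right]
  linarith

variable [CompleteSpace E]

theorem ContDiff.differentiable_gradient {g : E → ℝ} (hg : ContDiff ℝ 2 g) :
    Differentiable ℝ (gradient g) :=
  (InnerProductSpace.toDual ℝ E).symm.differentiable.comp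
    ((hg.fderiv_right (m := 1) (by norm_num)).differentiable one_ne_zero)

theorem taylor_lower_bound_of_hessian_ge {g : E → ℝ} (hg : Differentiable ℝ g)
    (hg' : Differentiable ℝ (gradient g)) {a v : E} {r lam : ℝ}
    (hHess : ∀ y ∈ closedBall a r, ∀ w, lam * ‖w‖ ^ 2 ≤ ⟪fderiv ℝ (gradient g) y w, w⟫)
    (hv : ‖v‖ ≤ r) :
    g a + ⟪gradient g a, v⟫ + lam / 2 * ‖v‖ ^ 2 ≤ g (a + v) := by
  have hline : ∀ s : ℝ, HasDerivAt (fun s : ℝ => a + s • v) v s := fun s => by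
    simpa using ((hasDerivAt_id s).smul_const v).const_add a
  have hφ : ∀ s : ℝ, HasDerivAt (fun s => g (a + s • v)) ⟪gradient g (a + s • v), v⟫ s :=
    fun s => by
      rw [inner_gradient_left]
      exact (hg _).hasFDerivAt.comp_hasDerivAt s (hline s)
  have hφ' : ∀ s : ℝ, HasDerivAt (fun s => ⟪gradient g (a + s • v), v⟫)
      ⟪fderiv ℝ (gradient g) (a + s • v) v, v⟫ s :=
    fun s => by
      simpa using ((hg' _).hasFDerivAt.comp_hasDerivAt s (hline s)).inner ℝ (hasDerivAt_const s v)
  have hsegment : ∀ s ∈ Ico (0 : ℝ) 1, a + s • v ∈ closedBall a r := fun s hs => by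
    rw [mem_closedBall_iff_norm, add_sub_cancel_left, norm_smul, Real.norm_of_nonneg hs.1]
    nlinarith [norm_nonneg v, hs.2]
  have := quadratic_lower_bound_of_le_deriv2 hφ hφ' fun s hs => hHess _ (hsegment s hs) v
  simp only [zero_smul, add_zero, one_smul] at this
  linarith

theorem half_mul_sq_norm_le_neg_inner_gradient {g : E → ℝ} (hg : Differentiable ℝ g)
    (hg' : Differentiable ℝ (gradient g)) {a v : E} {r lam : ℝ}
    (hHess : ∀ y ∈ closedBall a r, ∀ w, lam * ‖w‖ ^ 2 ≤ ⟪fderiv ℝ (gradient g) y w, w⟫)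
    (hv : ‖v‖ ≤ r) (ha : g a = 0) (hav : g (a + v) ≤ 0) :
    lam / 2 * ‖v‖ ^ 2 ≤ -⟪gradient g a, v⟫ := by
  linarith [taylor_lower_bound_of_hessian_ge hg hg' hHess hv]

theorem norm_sub_le_of_hessian_ge {g : E → ℝ} (hg : Differentiable ℝ g)
    (hg' : Differentiable ℝ (gradient g)) (hconv : ConvexOn ℝ univ g) {a b : E} {r lam K : ℝ}
    (hlam : 0 < lam) (hK : 0 ≤ K)
    (hHess : ∀ y ∈ closedBall a r, ∀ w, lam * ‖w‖ ^ 2 ≤ ⟪fderiv ℝ (gradient g) y w, w⟫)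
    (ha : g a = 0) (hb : g b ≤ 0) (hdir : -(K * ‖b - a‖) ≤ ⟪gradient g a, b - a⟫)
    (hKr : 2 * K / lam < r) :
    ‖b - a‖ ≤ 2 * K / lam := by
  have hr : 0 < r := lt_of_le_of_lt (div_nonneg (by linarith) hlam.le) hKr
  have hsegment : ∀ t ∈ Icc (0 : ℝ) 1, t * ‖b - a‖ ≤ r → t * ‖b - a‖ ≤ 2 * K / lam := by
    intro t ht htr
    have hnorm : ‖t • (b - a)‖ = t * ‖b - a‖ := by rw [norm_smul, Real.norm_of_nonneg ht.1]
    have hmem : a + t • (b - a) ∈ {x ∈ univ | g x ≤ 0} :=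
      (hconv.convex_le 0).add_smul_sub_mem ⟨trivial, ha.le⟩ ⟨trivial, hb⟩ ht
    have hgrowth := half_mul_sq_norm_le_neg_inner_gradient hg hg' hHess (hnorm ▸ htr) ha hmem.2
    rw [hnorm, real_inner_smul_right] at hgrowth
    set u := t * ‖b - a‖
    have hu : 0 ≤ u := mul_nonneg ht.1 (norm_nonneg _)
    have hquad : lam / 2 * u ^ 2 ≤ K * u := by nlinarith [ht.1]
    rw [le_div_iff₀ hlam]
    rcases hu.eq_or_lt with hu0 | hupos
    · rw [← hu0]; linarith
    · nlinarith
  -- If `b` lay outside the ball, the point of `[a, b]` at distance `r` from `a` would violate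
  -- the bound, as `2K/λ < r`.
  rcases le_or_gt ‖b - a‖ r with hle | hgt
  · simpa using hsegment 1 (right_mem_Icc.2 zero_le_one) (by simpa using hle)
  · have hpos : 0 < ‖b - a‖ := hr.trans hgt
    have := hsegment (r / ‖b - a‖) ⟨by positivity, (div_le_one hpos).2 hgt.le⟩
      (div_mul_cancel₀ _ hpos.ne').le
    rw [div_mul_cancel₀ _ hpos.ne'] at this
    linarith

theorem astar_local_lipschitz_general {n : ℕ}
    (g : EuclideanSpace ℝ (Fin n) → ℝ) (hg : ContDiff ℝ 3 g)
    (κ : ℝ) (hκ : 0 < κ) (hsc : StrongConvexOn Set.univ κ g)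
    (θ₁ θ₂ : EuclideanSpace ℝ (Fin n)) (θmin θmax : ℝ) (hθmin : 0 < θmin)
    (hθ₁lb : θmin ≤ ‖θ₁‖) (hθ₁ub : ‖θ₁‖ ≤ θmax)
    (a₁ a₂ : EuclideanSpace ℝ (Fin n))
    (ha₁bdry : g a₁ = 0)
    (ha₂mem : g a₂ ≤ 0) (ha₂max : ∀ b, g b ≤ 0 → ⟪θ₂, b⟫ ≤ ⟪θ₂, a₂⟫)
    (ω₁ : ℝ) (hω₁ : 0 < ω₁)
    (hgrad₁ : gradient g a₁ = ω₁ • θ₁)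
    (m' gradmax lamΔmin : ℝ) (hgradmax : 0 < gradmax)
    (hlamΔmin : 0 < lamΔmin)
    (hHess : ∀ y : EuclideanSpace ℝ (Fin n), ‖y - a₁‖ ≤ m' →
      ∀ v : EuclideanSpace ℝ (Fin n),
        lamΔmin * ‖v‖ ^ 2 ≤ ⟪fderiv ℝ (gradient g) y v, v⟫)
    (hgradbnd : ‖gradient g a₁‖ ≤ gradmax)
    (mθ : ℝ)
    (hmθ : mθ < min θmin (lamΔmin * θmin ^ 2 / (2 * gradmax * θmax) * m'))
    (hdist : ‖θ₁ - θ₂‖ ≤ mθ) :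
    ‖a₁ - a₂‖ ≤ 2 * gradmax * θmax / (lamΔmin * θmin ^ 2) * ‖θ₁ - θ₂‖ := by
  have hθmax : 0 < θmax := hθmin.trans_le (hθ₁lb.trans hθ₁ub)
  set C := 2 * gradmax * θmax / (lamΔmin * θmin ^ 2) with hC
  set d := ‖θ₁ - θ₂‖
  have hω₁θ₁ : ω₁ * ‖θ₁‖ ≤ gradmax := by
    rwa [hgrad₁, norm_smul, Real.norm_of_nonneg hω₁.le] at hgradbnd
  have hω₁le : ω₁ * θmin ^ 2 ≤ gradmax * θmax := by
    nlinarith [mul_le_mul_of_nonneg_left hθ₁lb hω₁.le]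
  have hK : 2 * (ω₁ * d) / lamΔmin ≤ C * d := by
    rw [div_mul_eq_mul_div, div_le_div_iff₀ hlamΔmin (by positivity)]
    nlinarith [mul_le_mul_of_nonneg_left hω₁le (by positivity : (0 : ℝ) ≤ 2 * d * lamΔmin)]
  have hCd : C * d < m' := calc
    C * d ≤ C * mθ := by gcongr
    _ < C * (lamΔmin * θmin ^ 2 / (2 * gradmax * θmax) * m') := by
      gcongr
      exact hmθ.trans_le (min_le_right _ _)
    _ = m' := by rw [hC]; field_simp
  have hdir : -(ω₁ * d * ‖a₂ - a₁‖) ≤ ⟪gradient g a₁, a₂ - a₁⟫ := by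
    rw [hgrad₁, real_inner_smul_left, mul_assoc, ← mul_neg]
    exact mul_le_mul_of_nonneg_left
      (neg_norm_sub_mul_le_inner_of_inner_le (ha₂max a₁ ha₁bdry.le)) hω₁.le
  rw [norm_sub_rev]
  exact (norm_sub_le_of_hessian_ge (hg.differentiable (by norm_num))
    (hg.of_le (by norm_num)).differentiable_gradient (hsc.convexOn fun _ => by positivity)
    hlamΔmin (by positivity) (fun y hy => hHess y (mem_closedBall_iff_norm.1 hy)) ha₁bdry ha₂mem
    hdir (hK.trans_lt hCd)).trans hK

/-- local Lipschitz continuity of the reward-maximizing action map.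
If `θ₁, θ₂` have norms in `[θmin, θmax]`, the maximizers `a*(θ₁), a*(θ₂)` lie on the boundary
of `𝒜 = {g ≤ 0}` with `∇g(a*(θᵢ)) = ωᵢθᵢ`, `ωᵢ > 0`, the Hessian lower bound
`λΔmin·I ⪯ ∇²g` holds on `B(a*(θ₁), m')`, `‖∇g(a*(θ₁))‖ ≤ ∇max`, and
`‖θ₁ − θ₂‖ ≤ m_θ < min{θmin, (λΔmin θmin²/(2 ∇max θmax)) m'}`, then
`‖a*(θ₁) − a*(θ₂)‖ ≤ (2 ∇max θmax/(λΔmin θmin²))·‖θ₁ − θ₂‖`. -/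
theorem astar_local_lipschitz {n : ℕ}
    (g : EuclideanSpace ℝ (Fin n) → ℝ) (hg : ContDiff ℝ 3 g)
    (κ : ℝ) (hκ : 0 < κ) (hsc : StrongConvexOn Set.univ κ g)
    (hcompact : IsCompact {x : EuclideanSpace ℝ (Fin n) | g x ≤ 0})
    (θ₁ θ₂ : EuclideanSpace ℝ (Fin n)) (θmin θmax : ℝ) (hθmin : 0 < θmin)
    (hθ₁lb : θmin ≤ ‖θ₁‖) (hθ₁ub : ‖θ₁‖ ≤ θmax)
    (hθ₂lb : θmin ≤ ‖θ₂‖) (hθ₂ub : ‖θ₂‖ ≤ θmax)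
    (a₁ a₂ : EuclideanSpace ℝ (Fin n))
    (ha₁mem : g a₁ ≤ 0) (ha₁max : ∀ b, g b ≤ 0 → ⟪θ₁, b⟫ ≤ ⟪θ₁, a₁⟫) (ha₁bdry : g a₁ = 0)
    (ha₂mem : g a₂ ≤ 0) (ha₂max : ∀ b, g b ≤ 0 → ⟪θ₂, b⟫ ≤ ⟪θ₂, a₂⟫) (ha₂bdry : g a₂ = 0)
    (ω₁ ω₂ : ℝ) (hω₁ : 0 < ω₁) (hω₂ : 0 < ω₂)
    (hgrad₁ : gradient g a₁ = ω₁ • θ₁) (hgrad₂ : gradient g a₂ = ω₂ • θ₂)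
    (m' gradmax lamΔmin : ℝ) (hm' : 0 < m') (hgradmax : 0 < gradmax)
    (hlamΔmin : 0 < lamΔmin)
    (hHess : ∀ y : EuclideanSpace ℝ (Fin n), ‖y - a₁‖ ≤ m' →
      ∀ v : EuclideanSpace ℝ (Fin n),
        lamΔmin * ‖v‖ ^ 2 ≤ ⟪fderiv ℝ (gradient g) y v, v⟫)
    (hgradbnd : ‖gradient g a₁‖ ≤ gradmax)
    (mθ : ℝ)
    (hmθ : mθ < min θmin (lamΔmin * θmin ^ 2 / (2 * gradmax * θmax) * m'))
    (hdist : ‖θ₁ - θ₂‖ ≤ mθ) :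
    ‖a₁ - a₂‖ ≤ 2 * gradmax * θmax / (lamΔmin * θmin ^ 2) * ‖θ₁ - θ₂‖ :=
  astar_local_lipschitz_general g hg κ hκ hsc θ₁ θ₂ θmin θmax hθmin hθ₁lb hθ₁ub a₁ a₂ ha₁bdry ha₂mem
    ha₂max ω₁ hω₁ hgrad₁ m' gradmax lamΔmin hgradmax hlamΔmin hHess hgradbnd mθ hmθ hdist
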